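/- Let R be a ring with elements t0, t1, t0v, t1v satisfying t0 + t1 + t0v + t1v = -1, such that each of t0^2, t1^2, t0v^2, t1v^2 is central in R. Then t0 commutes with (t0v + t1v)(t0v + t1v + 2). -/

import Mathlib

/-! Since `t0v + t1v + 1 = -(t0 + t1)`, the element `(t0v + t1v)(t0v + t1v + 2)` equals
`(t0 + t1)^2 - 1`, and `t0` commutes with `(t0 + t1)^2 = t0^2 + (t0 t1 + t1 t0) + t1^2`
termwise: with `t0 t1 + t1 t0` because `t0^2` commutes with `t1`. -/

theorem Commute.add_sq_of_sq {R : Type*} [Ring R] {a b : R} (ha : Commute (a ^ 2) b)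
    (hb : Commute a (b ^ 2)) : Commute a ((a + b) ^ 2) := by
  have hab : Commute a (a * b + b * a) := by
    calc a * (a * b + b * a) = a ^ 2 * b + a * b * a := by noncomm_ring
      _ = b * a ^ 2 + a * b * a := by rw [ha.eq]
      _ = (a * b + b * a) * a := by noncomm_ring
  have hexpand : (a + b) ^ 2 = a ^ 2 + (a * b + b * a) + b ^ 2 := by noncomm_ring
  rw [hexpand]
  exact ((Commute.self_pow a 2).add_right hab).add_right hb

theorem stmt_2_general {R : Type*} [Ring R] (t0 t1 t0v t1v : R)
    (hsum : t0 + t1 + t0v + t1v = -1)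
    (h0 : ∀ r : R, t0 ^ 2 * r = r * t0 ^ 2)
    (h1 : ∀ r : R, t1 ^ 2 * r = r * t1 ^ 2) :
    t0 * ((t0v + t1v) * (t0v + t1v + 2)) = ((t0v + t1v) * (t0v + t1v + 2)) * t0 := by
  have hsucc : t0v + t1v + 1 = -(t0 + t1) := by
    linear_combination (norm := noncomm_ring) hsum
  have hX : (t0v + t1v) * (t0v + t1v + 2) = (t0 + t1) ^ 2 - 1 := by
    rw [← neg_sq, ← hsucc]
    noncomm_ring
  rw [hX]
  exact ((Commute.add_sq_of_sq (h0 t1) (h1 t0).symm).sub_right (Commute.one_right t0)).eq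

/-- In the universal additive DAHA relations, `t0` commutes with
`(t0v + t1v)(t0v + t1v + 2)`. -/
theorem stmt_2 {R : Type*} [Ring R] (t0 t1 t0v t1v : R)
    (hsum : t0 + t1 + t0v + t1v = -1)
    (h0 : ∀ r : R, t0 ^ 2 * r = r * t0 ^ 2)
    (h1 : ∀ r : R, t1 ^ 2 * r = r * t1 ^ 2)
    (h0v : ∀ r : R, t0v ^ 2 * r = r * t0v ^ 2)
    (h1v : ∀ r : R, t1v ^ 2 * r = r * t1v ^ 2) :
    t0 * ((t0v + t1v) * (t0v + t1v + 2)) = ((t0v + t1v) * (t0v + t1v + 2)) * t0 :=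
  stmt_2_general t0 t1 t0v t1v hsum h0 h1
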